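/- There exists a bound T, depending only on the burstiness b, such that in every execution of algorithm Quadruple-Round against a 1-activating adversary of type (3/8, b), every injected packet is heard within T rounds of its injection; that is, Quadruple-Round has bounded packet latency against the 1-activating adversary of injection rate 3/8. -/

import Mathlib

/-- Remove one packet from the queue of station `i` (stations of a segment are indexed
`0, 1, 2, 3`; `q i` is the number of packets pending at station `i`). -/
def deqQR (q : ℕ → ℕ) (i : ℕ) : ℕ → ℕ := fun j => if j = i then q j - 1 else q j

/-- The number of active stations of a segment. -/
def activeCountQR (q : ℕ → ℕ) : ℕ :=
  (if q 0 = 0 then 0 else 1) + (if q 1 = 0 then 0 else 1) +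
    (if q 2 = 0 then 0 else 1) + (if q 3 = 0 then 0 else 1)

/-- One iteration of a phase of algorithm Quadruple-Round, for a segment whose stations
currently hold the packet counts `q` (with at least one active station).  It returns the
list of the rounds of the iteration — each entry `some i` meaning that a packet of station
`i` is heard in that round and `none` meaning a void round (collision or silence) — and
the resulting packet counts.  In the first round all active stations of the segment
transmit: if only one station is active its packet is heard and the iteration ends; after
a collision the stations of the left pair (0 and 1) transmit in the second round: if both
are active this is a collision and stations 0 and 1 then transmit singly in the third and
fourth rounds; if exactly one is active its packet is heard, ending the iteration; if the
second round is silent, the right-pair stations 2 and 3 transmit singly in the third and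
fourth rounds. -/
def iterQR (q : ℕ → ℕ) : List (Option ℕ) × (ℕ → ℕ) :=
  if activeCountQR q = 1 then
    let i := if q 0 ≠ 0 then 0 else if q 1 ≠ 0 then 1 else if q 2 ≠ 0 then 2 else 3
    ([some i], deqQR q i)
  else if q 0 ≠ 0 ∧ q 1 ≠ 0 then ([none, none, some 0, some 1], deqQR (deqQR q 0) 1)
  else if q 0 ≠ 0 then ([none, some 0], deqQR q 0)
  else if q 1 ≠ 0 then ([none, some 1], deqQR q 1)
  else ([none, none, some 2, some 3], deqQR (deqQR q 2) 3)

/-- The trace of a phase (fuelled version): iterations repeat until all stations of the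
segment are passive, and a final silent round ends the phase. -/
def phaseTraceAux : ℕ → (ℕ → ℕ) → List (Option ℕ)
  | 0, _ => []
  | fuel + 1, q =>
    if q 0 = 0 ∧ q 1 = 0 ∧ q 2 = 0 ∧ q 3 = 0 then [none]
    else (iterQR q).1 ++ phaseTraceAux fuel (iterQR q).2

/-- The round-by-round trace of the phase processing a segment whose four stations hold
the packet counts `q`. -/
def phaseTrace (q : ℕ → ℕ) : List (Option ℕ) :=
  phaseTraceAux (q 0 + q 1 + q 2 + q 3 + 1) q

/-- The number of rounds taken by the phase processing a segment with packet counts `q`. -/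
def phaseLen (q : ℕ → ℕ) : ℕ := (phaseTrace q).length

/-- Admissibility of a 1-activating injection pattern `a` (in round `t`, a fresh passive
station labelled `t` is activated with `a t` packets, when `a t > 0`) for the leaky-bucket
adversary of type `(ρ, b)`. -/
def Admissible (ρ : ℝ) (b : ℕ) (a : ℕ → ℕ) : Prop :=
  ∀ s n : ℕ, ((∑ t ∈ Finset.Ico s (s + n), a t : ℕ) : ℝ) ≤ ρ * n + b

/-- The packet counts of the four stations of segment `j` (segment `j` consists of the
rounds `4j, …, 4j + 3`; against a 1-activating adversary each station holds exactly the
packets injected at its activation). -/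
def segQ (a : ℕ → ℕ) (j : ℕ) : ℕ → ℕ := fun i => a (4 * j + i)

/-- The first round of the phase processing segment `j`: phases are executed one after the
other, and the phase of a segment starts only after at least four rounds have passed since
the first round of the segment. -/
def phaseStart (a : ℕ → ℕ) : ℕ → ℕ
  | 0 => 4
  | j + 1 => max (phaseStart a j + phaseLen (segQ a j)) (4 * (j + 1) + 4)

/-- The number of packets of station `v` heard (in the phase of its segment `v / 4`)
strictly before round `t`. -/
def heardBefore (a : ℕ → ℕ) (v t : ℕ) : ℕ :=
  ((List.range (phaseTrace (segQ a (v / 4))).length).filter fun off =>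
      decide (phaseStart a (v / 4) + off < t) &&
      decide ((phaseTrace (segQ a (v / 4))).getD off none = some (v % 4))).length

/-- The number of packets pending at station `v` at the beginning of round `t` in the
execution of Quadruple-Round against the 1-activating injection pattern `a`. -/
def pendingQR (a : ℕ → ℕ) (v t : ℕ) : ℕ := a v - heardBefore a v t

/-! A phase for a segment holding `n` packets lasts at most `2n + 1` rounds: every iteration
spends at most two rounds per packet it delivers, and one silent round ends the phase. Let
`k ≤ j` be the last segment whose phase starts as early as allowed, in round `4k + 4`; from
there on phases run back to back, so phase `j` starts by round `4k + 4 + ∑_{k ≤ i < j} (2nᵢ + 1)`.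
Segments `k, …, j - 1` span `4(j - k)` rounds and so receive at most `(3/8)·4(j - k) + b`
packets, whence phase `j` starts by round `4j + 4 + 2b`. A packet injected in segment `j` is
thus heard before phase `j + 1` starts, within `2b + 8` rounds of its injection. -/

def segTotal (q : ℕ → ℕ) : ℕ := q 0 + q 1 + q 2 + q 3

lemma count_iterQR_add (q : ℕ → ℕ) (hq : segTotal q ≠ 0) {i : ℕ} (hi : i < 4) :
    (iterQR q).1.count (some i) + (iterQR q).2 i = q i := by
  unfold segTotal at hq
  by_cases h0 : q 0 = 0 <;> by_cases h1 : q 1 = 0 <;> by_cases h2 : q 2 = 0 <;>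
    by_cases h3 : q 3 = 0 <;> interval_cases i <;>
    simp [iterQR, activeCountQR, deqQR, h0, h1, h2, h3] <;> omega

lemma length_iterQR_add_le (q : ℕ → ℕ) (hq : segTotal q ≠ 0) :
    (iterQR q).1.length + 2 * segTotal (iterQR q).2 ≤ 2 * segTotal q := by
  unfold segTotal at *
  by_cases h0 : q 0 = 0 <;> by_cases h1 : q 1 = 0 <;> by_cases h2 : q 2 = 0 <;>
    by_cases h3 : q 3 = 0 <;> simp [iterQR, activeCountQR, deqQR, h0, h1, h2, h3] <;> omega

lemma segTotal_iterQR_lt (q : ℕ → ℕ) (hq : segTotal q ≠ 0) :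
    segTotal (iterQR q).2 < segTotal q := by
  have hne : (iterQR q).1 ≠ [] := by unfold iterQR; split_ifs <;> simp
  have hlen := length_iterQR_add_le q hq
  have hpos := List.length_pos_iff.mpr hne
  omega

lemma segTotal_eq_zero_iff (q : ℕ → ℕ) :
    segTotal q = 0 ↔ q 0 = 0 ∧ q 1 = 0 ∧ q 2 = 0 ∧ q 3 = 0 := by
  unfold segTotal; omega

lemma count_phaseTraceAux {fuel : ℕ} {q : ℕ → ℕ} (hfuel : segTotal q < fuel) {i : ℕ}
    (hi : i < 4) : (phaseTraceAux fuel q).count (some i) = q i := by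
  induction fuel generalizing q with
  | zero => omega
  | succ fuel ih =>
    rw [phaseTraceAux]
    split_ifs with hzero
    · obtain ⟨h0, h1, h2, h3⟩ := hzero
      interval_cases i <;> simp [*]
    · have hq : segTotal q ≠ 0 := by rwa [Ne, segTotal_eq_zero_iff]
      have hlt := segTotal_iterQR_lt q hq
      rw [List.count_append, ih (by omega), count_iterQR_add q hq hi]

lemma length_phaseTraceAux_le (fuel : ℕ) (q : ℕ → ℕ) :
    (phaseTraceAux fuel q).length ≤ 2 * segTotal q + 1 := by
  induction fuel generalizing q with
  | zero => simp [phaseTraceAux]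
  | succ fuel ih =>
    rw [phaseTraceAux]
    split_ifs with hzero
    · simp
    · have hiter := length_iterQR_add_le q (by rwa [Ne, segTotal_eq_zero_iff])
      have hrest := ih (iterQR q).2
      rw [List.length_append]
      omega

lemma count_phaseTrace (q : ℕ → ℕ) {i : ℕ} (hi : i < 4) :
    (phaseTrace q).count (some i) = q i :=
  count_phaseTraceAux (by unfold segTotal; omega) hi

lemma phaseLen_le (q : ℕ → ℕ) : phaseLen q ≤ 2 * segTotal q + 1 :=
  length_phaseTraceAux_le _ q

lemma List.length_filter_range_getD_eq_count {α : Type*} [BEq α] [LawfulBEq α] [DecidableEq α]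
    (l : List α) (d x : α) :
    ((List.range l.length).filter fun i => decide (l.getD i d = x)).length = l.count x := by
  induction l with
  | nil => simp
  | cons y l ih =>
    have hshift : (List.map Nat.succ (List.range l.length)).filter
        (fun i => decide ((y :: l).getD i d = x)) =
        List.map Nat.succ ((List.range l.length).filter fun i => decide (l.getD i d = x)) := by
      rw [List.filter_map]; rfl
    rw [List.length_cons, List.range_succ_eq_map, List.filter_cons, hshift]
    by_cases hyx : y = x
    · subst hyx; simpa using ih
    · simpa [hyx, List.count_cons_of_ne hyx] using ih

lemma phaseStart_add_phaseLen_le (a : ℕ → ℕ) (j : ℕ) :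
    phaseStart a j + phaseLen (segQ a j) ≤ phaseStart a (j + 1) :=
  le_max_left _ _

lemma exists_phaseStart_eq_sum (a : ℕ → ℕ) (j : ℕ) :
    ∃ k ≤ j, phaseStart a j = 4 * k + 4 + ∑ i ∈ Finset.Ico k j, phaseLen (segQ a i) := by
  induction j with
  | zero => exact ⟨0, le_rfl, by simp [phaseStart]⟩
  | succ j ih =>
    obtain ⟨k, hkj, hk⟩ := ih
    by_cases hbusy : 4 * (j + 1) + 4 ≤ phaseStart a j + phaseLen (segQ a j)
    · refine ⟨k, by omega, ?_⟩
      rw [phaseStart, max_eq_left hbusy, hk, Finset.sum_Ico_succ_top hkj]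
      ring
    · refine ⟨j + 1, le_rfl, ?_⟩
      rw [phaseStart, max_eq_right (by omega)]
      simp

lemma sum_segTotal_segQ (a : ℕ → ℕ) {k j : ℕ} (hkj : k ≤ j) :
    ∑ i ∈ Finset.Ico k j, segTotal (segQ a i) = ∑ t ∈ Finset.Ico (4 * k) (4 * j), a t := by
  induction j, hkj using Nat.le_induction with
  | base => simp
  | succ j hkj ih =>
    rw [Finset.sum_Ico_succ_top hkj, ih,
      ← Finset.sum_Ico_consecutive _ (by omega : 4 * k ≤ 4 * j) (by omega : 4 * j ≤ 4 * (j + 1)),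
      Nat.mul_succ]
    simp [Finset.sum_Ico_eq_sum_range, Finset.sum_range_succ, segTotal, segQ, add_assoc]

lemma Admissible.eight_mul_sum_le {ρ : ℝ} {b : ℕ} {a : ℕ → ℕ} (hA : Admissible ρ b a)
    (hρ : ρ ≤ 3 / 8) (s n : ℕ) :
    8 * ∑ t ∈ Finset.Ico s (s + n), a t ≤ 3 * n + 8 * b := by
  have h := hA s n
  have hρn : ρ * n ≤ 3 / 8 * n := by gcongr
  have hreal : (8 * ∑ t ∈ Finset.Ico s (s + n), a t : ℝ) ≤ 3 * n + 8 * b := by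
    push_cast at h ⊢
    linarith
  exact_mod_cast hreal

lemma phaseStart_le {ρ : ℝ} {b : ℕ} {a : ℕ → ℕ} (hA : Admissible ρ b a) (hρ : ρ ≤ 3 / 8)
    (j : ℕ) : phaseStart a j ≤ 4 * j + 4 + 2 * b := by
  obtain ⟨k, hkj, hk⟩ := exists_phaseStart_eq_sum a j
  have hlen : ∑ i ∈ Finset.Ico k j, phaseLen (segQ a i) ≤
      2 * ∑ t ∈ Finset.Ico (4 * k) (4 * j), a t + (j - k) := by
    calc ∑ i ∈ Finset.Ico k j, phaseLen (segQ a i)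
        ≤ ∑ i ∈ Finset.Ico k j, (2 * segTotal (segQ a i) + 1) :=
          Finset.sum_le_sum fun i _ => phaseLen_le _
      _ = 2 * ∑ t ∈ Finset.Ico (4 * k) (4 * j), a t + (j - k) := by
          rw [Finset.sum_add_distrib, ← Finset.mul_sum, sum_segTotal_segQ a hkj]
          simp
  have hinj := hA.eight_mul_sum_le hρ (4 * k) (4 * (j - k))
  rw [show 4 * k + 4 * (j - k) = 4 * j by omega] at hinj
  omega

lemma heardBefore_eq_of_phase_end_le {a : ℕ → ℕ} {v t : ℕ}
    (ht : phaseStart a (v / 4) + phaseLen (segQ a (v / 4)) ≤ t) :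
    heardBefore a v t = a v := by
  have hbefore : ∀ off ∈ List.range (phaseTrace (segQ a (v / 4))).length,
      phaseStart a (v / 4) + off < t := by
    intro off hoff
    have hoff' : off < phaseLen (segQ a (v / 4)) := List.mem_range.mp hoff
    omega
  rw [heardBefore, List.filter_congr fun off hoff => by
      rw [decide_eq_true (hbefore off hoff), Bool.true_and],
    List.length_filter_range_getD_eq_count, count_phaseTrace _ (Nat.mod_lt v (by norm_num))]
  simp only [segQ]
  congr 1
  omega

theorem quadruple_round_bounded_latency_general (b : ℕ) :
    ∃ T : ℕ, ∀ a : ℕ → ℕ, Admissible (3/8) b a → ∀ v : ℕ,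
      pendingQR a v (v + T + 1) = 0 := by
  refine ⟨2 * b + 7, fun a hA v => ?_⟩
  have hend : phaseStart a (v / 4) + phaseLen (segQ a (v / 4)) ≤ v + (2 * b + 7) + 1 :=
    (phaseStart_add_phaseLen_le a _).trans ((phaseStart_le hA le_rfl _).trans (by omega))
  rw [pendingQR, heardBefore_eq_of_phase_end_le hend, Nat.sub_self]

/-- there is a bound `T`, depending only on the burstiness `b`, such that in
every execution of Quadruple-Round against a 1-activating injection pattern admissible for
the adversary of type `(3/8, b)`, every station activated in a round `v` has all its
packets heard within `T` rounds of their injection; that is, Quadruple-Round has bounded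
packet latency against the 1-activating adversary of injection rate `3/8`. -/
theorem quadruple_round_bounded_latency (b : ℕ) (hb : 0 < b) :
    ∃ T : ℕ, ∀ a : ℕ → ℕ, Admissible (3/8) b a → ∀ v : ℕ,
      pendingQR a v (v + T + 1) = 0 :=
  quadruple_round_bounded_latency_general b
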